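/- arXiv:2412.03869 — 3 statements merged into one kernel-verified Lean document; each statement's English description precedes it below -/
import Mathlib

section
/- Every connected 4-regular finite simple graph of order at least seven has a foresty minimum vertex cut, i.e., a vertex cut S with |S| = κ(G) such that the induced subgraph G[S] is a forest. -/
open SimpleGraph

/-- `S` is a vertex cut of `G`: a proper subset of the vertex set whose removal
disconnects the graph. -/
def IsVertexCut {V : Type*} [Fintype V] (G : SimpleGraph V) (S : Finset V) : Prop :=
  (S : Set V) ≠ Set.univ ∧ ¬ (G.induce ((S : Set V)ᶜ)).Connected

/-- The connectivity `κ(G)`: the minimum cardinality of a vertex cut of `G`. -/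
noncomputable def graphConnectivity {V : Type*} [Fintype V] (G : SimpleGraph V) : ℕ :=
  sInf {k | ∃ S : Finset V, IsVertexCut G S ∧ S.card = k}

/-!
Let `S` be a minimum vertex cut with sides `A` and `B`. The neighbourhood of a vertex is a cut, so
`|S| ≤ 4`, and minimality gives every vertex of `S` a neighbour in `A` and one in `B`; by
4-regularity a vertex with two neighbours in `S` then has exactly one neighbour on each side.
If `G[S]` is not a forest, it contains a triangle or a 4-cycle.

For a triangle `xyz`, replace `x` by its neighbour `α ∈ A`: unless `α ~ y` this is again a minimum
cut, and the only possible cycle, `αyz`, is gone. For a 4-cycle `s₁s₂s₃s₄`, the neighbourhood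
`{s₂, s₄, a, b}` of `s₁` is a minimum cut whose only possible cycle `s₂as₄b` is missing unless `s₂`
shares both side-neighbours of `s₁`.

In the remaining cases two vertices of `S` see the same single vertex `α` in `A` and `β` in `B`.
Then `A = {α}`, as otherwise moving `α` into the cut in place of these two vertices gives a smaller
cut; likewise `B = {β}`, so `G` has at most `|S| + 2 ≤ 6` vertices.
-/

namespace SimpleGraph

variable {V : Type*} {G : SimpleGraph V}

theorem isAcyclic_induce_iff {s : Set V} :
    (G.induce s).IsAcyclic ↔ ∀ u (c : G.Walk u u), c.IsCycle → ∃ x ∈ c.support, x ∉ s := by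
  have hinj : Function.Injective (Embedding.induce (G := G) s).toHom :=
    (Embedding.induce (G := G) s).injective
  refine ⟨fun h u c hc => ?_, fun h u c hc => ?_⟩
  · by_contra! hs
    refine h (c.induce s hs) ?_
    rwa [← Walk.isCycle_map_iff_of_injective hinj, Walk.map_induce]
  · obtain ⟨x, hx, hxs⟩ := h _ _ (hc.map hinj)
    rw [Walk.support_map, List.mem_map] at hx
    obtain ⟨y, -, rfl⟩ := hx
    exact hxs y.2

theorem Walk.IsCycle.exists_adj_ne {u v : V} {c : G.Walk u u} (hc : c.IsCycle)
    (hv : v ∈ c.support) :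
    ∃ w₁ ∈ c.support, ∃ w₂ ∈ c.support, w₁ ≠ w₂ ∧ G.Adj v w₁ ∧ G.Adj v w₂ := by
  obtain ⟨w₁, w₂, hne, heq⟩ := Set.ncard_eq_two.mp (hc.ncard_neighborSet_toSubgraph_eq_two hv)
  have h₁ : c.toSubgraph.Adj v w₁ := show w₁ ∈ c.toSubgraph.neighborSet v by simp [heq]
  have h₂ : c.toSubgraph.Adj v w₂ := show w₂ ∈ c.toSubgraph.neighborSet v by simp [heq]
  exact ⟨w₁, c.mem_verts_toSubgraph.mp h₁.snd_mem, w₂, c.mem_verts_toSubgraph.mp h₂.snd_mem,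
    hne, h₁.adj_sub, h₂.adj_sub⟩

theorem IsAcyclic.induce_of_adj_eq {s t : Set V} (hs : (G.induce s).IsAcyclic)
    (ht : ∀ v ∈ t, v ∉ s → ∀ u ∈ t, ∀ w ∈ t, G.Adj v u → G.Adj v w → u = w) :
    (G.induce t).IsAcyclic := by
  rw [isAcyclic_induce_iff] at hs ⊢
  intro x c hc
  by_contra! hct
  obtain ⟨v, hv, hvs⟩ := hs x c hc
  obtain ⟨w₁, hw₁, w₂, hw₂, hne, h₁, h₂⟩ := hc.exists_adj_ne hv
  exact hne (ht v (hct v hv) hvs w₁ (hct w₁ hw₁) w₂ (hct w₂ hw₂) h₁ h₂)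

theorem isAcyclic_induce_triple {a b c : V} (hab : ¬G.Adj a b) :
    (G.induce {a, b, c}).IsAcyclic := by
  refine IsAcyclic.induce_of_adj_eq (s := {b, c}) (IsAcyclic.of_card_le_two ?_) ?_
  · exact (Set.encard_insert_le _ _).trans (by simp [Set.encard_singleton]; norm_num)
  · intro v hv hvs u hu w hw hvu hvw
    simp only [Set.mem_insert_iff, Set.mem_singleton_iff] at hv hvs hu hw
    obtain rfl : v = a := by tauto
    rcases hu with rfl | rfl | rfl <;> rcases hw with rfl | rfl | rfl <;> simp_all

theorem isAcyclic_induce_quadruple {p q a b : V} (hpq : ¬G.Adj p q) (hab : ¬G.Adj a b)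
    (hp : ¬(G.Adj p a ∧ G.Adj p b)) : (G.induce {p, q, a, b}).IsAcyclic := by
  refine IsAcyclic.induce_of_adj_eq (s := {a, b, q}) (isAcyclic_induce_triple hab) ?_
  intro v hv hvs u hu w hw hvu hvw
  simp only [Set.mem_insert_iff, Set.mem_singleton_iff] at hv hvs hu hw
  obtain rfl : v = p := by tauto
  rcases hu with rfl | rfl | rfl | rfl <;> rcases hw with rfl | rfl | rfl | rfl <;> simp_all

theorem exists_triangle_or_fourCycle_of_not_isAcyclic_induce {S : Finset V} (hS : S.card ≤ 4)
    (h : ¬(G.induce (S : Set V)).IsAcyclic) :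
    (∃ x ∈ S, ∃ y ∈ S, ∃ z ∈ S, G.Adj x y ∧ G.Adj y z ∧ G.Adj z x) ∨
    ∃ s₁ ∈ S, ∃ s₂ ∈ S, ∃ s₃ ∈ S, ∃ s₄ ∈ S,
      G.Adj s₁ s₂ ∧ G.Adj s₂ s₃ ∧ G.Adj s₃ s₄ ∧ G.Adj s₄ s₁ ∧ s₁ ≠ s₃ ∧ s₂ ≠ s₄ := by
  classical
  rw [isAcyclic_induce_iff] at h
  push Not at h
  obtain ⟨u, c, hc, hcS⟩ := h
  simp only [Finset.mem_coe] at hcS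
  have hlen : c.length ≤ 4 := by
    have hcard := List.toFinset_card_of_nodup hc.support_nodup
    rw [List.length_tail, Walk.length_support, Nat.add_sub_cancel] at hcard
    exact hcard ▸ hS.trans' (Finset.card_le_card fun x hx =>
      hcS x (List.mem_of_mem_tail (List.mem_toFinset.mp hx)))
  have h3 := hc.three_le_length
  have hnodup := hc.support_nodup
  rcases c with _ | ⟨h₁, _ | ⟨h₂, _ | ⟨h₃, _ | ⟨h₄, c⟩⟩⟩⟩
  iterate 3 simp at h3
  · exact Or.inl ⟨_, hcS _ (by simp), _, hcS _ (by simp), _, hcS _ (by simp), h₁, h₂, h₃⟩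
  · cases c with
    | nil =>
      simp only [Walk.support_cons, Walk.support_nil, List.tail_cons, List.nodup_cons,
        List.mem_cons, List.not_mem_nil] at hnodup
      exact Or.inr ⟨_, hcS _ (by simp), _, hcS _ (by simp), _, hcS _ (by simp), _,
        hcS _ (by simp), h₁, h₂, h₃, h₄, by tauto, by tauto⟩
    | cons =>
      simp only [Walk.length_cons] at hlen
      omega

end SimpleGraph

/-- `A` is a nonempty union of components of `G - S` missing some vertex of `G - S`;
the opposite side is `(S ∪ A)ᶜ`. -/
structure IsCutSide {V : Type*} (G : SimpleGraph V) (S A : Finset V) : Prop where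
  disjoint : Disjoint S A
  nonempty : A.Nonempty
  exists_notMem : ∃ v, v ∉ S ∧ v ∉ A
  mem_of_adj : ∀ ⦃a b⦄, a ∈ A → G.Adj a b → b ∉ S → b ∈ A

namespace IsCutSide

variable {V : Type*} {G : SimpleGraph V} {S A : Finset V}

theorem notMem_of_mem (hA : IsCutSide G S A) {a : V} (ha : a ∈ A) : a ∉ S :=
  Finset.disjoint_right.mp hA.disjoint ha

theorem insert_erase [DecidableEq V] (hA : IsCutSide G S A) {α : V} (hα : α ∈ A)
    (hA' : (A.erase α).Nonempty) {S' : Finset V} (hS' : S' ⊆ S) {x : V} (hx : x ∈ S) (hxS' : x ∉ S')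
    (huniq : ∀ s ∈ S, s ∉ S' → ∀ a ∈ A, G.Adj s a → a = α) :
    IsCutSide G (insert α S') (A.erase α) := by
  refine ⟨Finset.disjoint_left.mpr fun v hv h => ?_, hA', ⟨x, ?_, ?_⟩, fun a b ha hab hb => ?_⟩
  · obtain ⟨hvα, hvA⟩ := Finset.mem_erase.mp h
    rcases Finset.mem_insert.mp hv with rfl | hv
    · exact hvα rfl
    · exact hA.notMem_of_mem hvA (hS' hv)
  · rw [Finset.mem_insert, not_or]
    exact ⟨fun h => hA.notMem_of_mem (h ▸ hα) hx, hxS'⟩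
  · exact fun h => hA.notMem_of_mem (Finset.mem_of_mem_erase h) hx
  · obtain ⟨haα, ha⟩ := Finset.mem_erase.mp ha
    rw [Finset.mem_insert, not_or] at hb
    have hbS : b ∉ S := fun hbS => haα (huniq b hbS hb.2 a ha hab.symm)
    exact Finset.mem_erase.mpr ⟨hb.1, hA.mem_of_adj ha hab hbS⟩

end IsCutSide

section

variable {V : Type*} [Fintype V] {G : SimpleGraph V}

def IsForestyMinimumVertexCut (G : SimpleGraph V) (S : Finset V) : Prop :=
  IsVertexCut G S ∧ S.card = graphConnectivity G ∧ (G.induce (S : Set V)).IsAcyclic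

theorem graphConnectivity_le {T : Finset V} (hT : IsVertexCut G T) :
    graphConnectivity G ≤ T.card :=
  Nat.sInf_le ⟨T, hT, rfl⟩

theorem exists_isVertexCut_card_eq_graphConnectivity (h : ∃ T, IsVertexCut G T) :
    ∃ S, IsVertexCut G S ∧ S.card = graphConnectivity G :=
  Nat.sInf_mem (s := {k | ∃ S : Finset V, IsVertexCut G S ∧ S.card = k})
    (let ⟨T, hT⟩ := h; ⟨T.card, T, hT, rfl⟩)

theorem isForestyMinimumVertexCut_of_card_le {T : Finset V} (hT : IsVertexCut G T)
    (hcard : T.card ≤ graphConnectivity G) (hac : (G.induce (T : Set V)).IsAcyclic) :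
    IsForestyMinimumVertexCut G T :=
  ⟨hT, hcard.antisymm (graphConnectivity_le hT), hac⟩

theorem IsCutSide.isVertexCut {S A : Finset V} (hA : IsCutSide G S A) : IsVertexCut G S := by
  obtain ⟨a, ha⟩ := hA.nonempty
  obtain ⟨b, hbS, hbA⟩ := hA.exists_notMem
  refine ⟨fun h => hbS (Set.eq_univ_iff_forall.mp h b), fun hconn => hbA ?_⟩
  obtain ⟨p⟩ := hconn.preconnected ⟨a, hA.notMem_of_mem ha⟩ ⟨b, hbS⟩
  suffices ∀ {x y : ((S : Set V)ᶜ : Set V)}, (G.induce (S : Set V)ᶜ).Walk x y →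
      (x : V) ∈ A → (y : V) ∈ A from this p ha
  intro x y p
  induction p with
  | nil => exact id
  | @cons _ v _ h _ ih => exact fun hx => ih (hA.mem_of_adj hx h v.2)

theorem IsVertexCut.exists_isCutSide {S : Finset V} (hS : IsVertexCut G S) :
    ∃ A, IsCutSide G S A := by
  classical
  obtain ⟨hne, hdis⟩ := hS
  obtain ⟨u, hu⟩ : ∃ u, u ∉ S := by
    by_contra! h
    exact hne (Set.eq_univ_of_forall h)
  have : Nonempty ((S : Set V)ᶜ : Set V) := ⟨⟨u, hu⟩⟩
  obtain ⟨x, y, hxy⟩ : ∃ x y, ¬(G.induce (S : Set V)ᶜ).Reachable x y := by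
    by_contra! h
    exact hdis ⟨h⟩
  refine ⟨Finset.univ.filter fun v => ∃ hv : v ∉ S, (G.induce _).Reachable x ⟨v, hv⟩,
    Finset.disjoint_left.mpr fun v hv h => (Finset.mem_filter.mp h).2.1 hv,
    ⟨x, Finset.mem_filter.mpr ⟨Finset.mem_univ _, x.2, Reachable.refl _⟩⟩,
    ⟨y, y.2, fun h => hxy (Finset.mem_filter.mp h).2.2⟩, ?_⟩
  intro a b ha hab hb
  obtain ⟨-, ha, hxa⟩ := Finset.mem_filter.mp ha
  exact Finset.mem_filter.mpr ⟨Finset.mem_univ _, hb, hxa.trans (Adj.reachable hab)⟩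

end

section

variable {V : Type*} [Fintype V] [DecidableEq V] {G : SimpleGraph V} [DecidableRel G.Adj]

theorem isVertexCut_neighborFinset (v : V) (h : G.degree v + 1 < Fintype.card V) :
    IsVertexCut G (G.neighborFinset v) := by
  refine IsCutSide.isVertexCut (A := {v}) ⟨Finset.disjoint_singleton_right.mpr
    (G.notMem_neighborFinset_self v), Finset.singleton_nonempty v, ?_, ?_⟩
  · obtain ⟨w, -, hw⟩ := Finset.exists_mem_notMem_of_card_lt_card
      (s := insert v (G.neighborFinset v)) (t := Finset.univ)
      ((Finset.card_insert_le _ _).trans_lt h)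
    rw [Finset.mem_insert, not_or] at hw
    exact ⟨w, hw.2, by simpa using hw.1⟩
  · intro a b ha hab hb
    rw [Finset.mem_singleton] at ha
    exact absurd (ha ▸ (G.mem_neighborFinset a b).mpr hab) hb

end

namespace IsCutSide

variable {V : Type*} [Fintype V] [DecidableEq V] {G : SimpleGraph V} {S A : Finset V}

theorem compl (hA : IsCutSide G S A) : IsCutSide G S (S ∪ A)ᶜ := by
  obtain ⟨b, hbS, hbA⟩ := hA.exists_notMem
  obtain ⟨a, ha⟩ := hA.nonempty
  refine ⟨Finset.disjoint_left.mpr fun v hv h => ?_, ⟨b, by simp [hbS, hbA]⟩,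
    ⟨a, hA.notMem_of_mem ha, by simp [ha]⟩, fun v w hv hvw hw => ?_⟩
  · simp [hv] at h
  · simp only [Finset.mem_compl, Finset.mem_union, not_or] at hv ⊢
    exact ⟨hw, fun hwA => hv.2 (hA.mem_of_adj hwA hvw.symm hv.1)⟩

theorem exists_adj (hA : IsCutSide G S A) (hS : S.card = graphConnectivity G) {s : V}
    (hs : s ∈ S) : ∃ a ∈ A, G.Adj s a := by
  by_contra! h
  obtain ⟨b, hbS, hbA⟩ := hA.exists_notMem
  have hcut : IsCutSide G (S.erase s) A :=
    ⟨hA.disjoint.mono_left (Finset.erase_subset s S), hA.nonempty,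
      ⟨b, fun hb => hbS (Finset.mem_of_mem_erase hb), hbA⟩, fun a c ha hac hc => by
        obtain rfl | hcs := eq_or_ne c s
        · exact absurd hac.symm (h a ha)
        · exact hA.mem_of_adj ha hac fun hcS => hc (Finset.mem_erase.mpr ⟨hcs, hcS⟩)⟩
  have := graphConnectivity_le hcut.isVertexCut
  rw [Finset.card_erase_of_mem hs, ← hS] at this
  have := Finset.card_pos.mpr ⟨s, hs⟩
  omega

theorem eq_singleton_of_adj_eq (hA : IsCutSide G S A) (hS : S.card = graphConnectivity G)
    {α x y : V} (hα : α ∈ A) (hx : x ∈ S) (hy : y ∈ S) (hxy : x ≠ y)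
    (hxα : ∀ a ∈ A, G.Adj x a → a = α) (hyα : ∀ a ∈ A, G.Adj y a → a = α) : A = {α} := by
  by_contra hne
  have hA' : (A.erase α).Nonempty := by
    rw [Finset.nonempty_iff_ne_empty, Ne, Finset.erase_eq_empty_iff, not_or]
    exact ⟨hA.nonempty.ne_empty, hne⟩
  have hyx : y ∈ S.erase x := Finset.mem_erase.mpr ⟨hxy.symm, hy⟩
  have hcut := hA.insert_erase hα hA' ((Finset.erase_subset y _).trans (Finset.erase_subset x S))
    hx (fun h => Finset.notMem_erase x S (Finset.mem_of_mem_erase h)) fun s hs hs' => by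
      rcases eq_or_ne s x with rfl | hsx
      · exact hxα
      rcases eq_or_ne s y with rfl | hsy
      · exact hyα
      exact absurd (Finset.mem_erase.mpr ⟨hsy, Finset.mem_erase.mpr ⟨hsx, hs⟩⟩) hs'
  have := (graphConnectivity_le hcut.isVertexCut).trans (Finset.card_insert_le _ _)
  rw [Finset.card_erase_of_mem hyx, Finset.card_erase_of_mem hx, ← hS] at this
  have := Finset.card_le_card (Finset.insert_subset hx (Finset.singleton_subset_iff.mpr hy))
  rw [Finset.card_pair hxy] at this
  omega

section

variable [DecidableRel G.Adj]

theorem card_inter_add_card_inter_lt_degree (hA : IsCutSide G S A)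
    (hS : S.card = graphConnectivity G) {s : V} (hs : s ∈ S) :
    (G.neighborFinset s ∩ S).card + (G.neighborFinset s ∩ A).card < G.degree s := by
  obtain ⟨b, hb, hsb⟩ := hA.compl.exists_adj hS hs
  rw [← Finset.card_union_of_disjoint
    (hA.disjoint.mono Finset.inter_subset_right Finset.inter_subset_right),
    ← Finset.inter_union_distrib_left, ← card_neighborFinset_eq_degree]
  refine Finset.card_lt_card ((Finset.ssubset_iff_of_subset Finset.inter_subset_left).mpr
    ⟨b, (G.mem_neighborFinset s b).mpr hsb, fun h => ?_⟩)
  simp only [Finset.mem_compl] at hb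
  exact hb (Finset.mem_inter.mp h).2

theorem eq_or_eq_of_adj (hA : IsCutSide G S A) (hS : S.card = graphConnectivity G)
    (hreg : G.IsRegularOfDegree 4) {s p q u : V} (hs : s ∈ S) (hp : p ∈ S) (hq : q ∈ S)
    (hu : u ∈ S) (hpq : p ≠ q) (hsp : G.Adj s p) (hsq : G.Adj s q) (hsu : G.Adj s u) :
    u = p ∨ u = q := by
  by_contra! h
  have hlt := hA.card_inter_add_card_inter_lt_degree hS hs
  obtain ⟨a, ha, hsa⟩ := hA.exists_adj hS hs
  have h3 : 2 < (G.neighborFinset s ∩ S).card := Finset.two_lt_card.mpr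
    ⟨p, by simp [hp, hsp], q, by simp [hq, hsq], u, by simp [hu, hsu], hpq, h.1.symm, h.2.symm⟩
  have h1 : 0 < (G.neighborFinset s ∩ A).card := Finset.card_pos.mpr ⟨a, by simp [ha, hsa]⟩
  rw [hreg s] at hlt
  omega

theorem eq_of_adj_of_adj (hA : IsCutSide G S A) (hS : S.card = graphConnectivity G)
    (hreg : G.IsRegularOfDegree 4) {s a a' : V} (hs : s ∈ S)
    (hs2 : 1 < (G.neighborFinset s ∩ S).card) (ha : a ∈ A) (ha' : a' ∈ A)
    (hsa : G.Adj s a) (hsa' : G.Adj s a') : a = a' := by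
  have hlt := hA.card_inter_add_card_inter_lt_degree hS hs
  rw [hreg s] at hlt
  exact (Finset.card_le_one (s := G.neighborFinset s ∩ A)).mp (by omega) a (by simp [ha, hsa]) a'
    (by simp [ha', hsa'])

theorem not_adj_of_triangle (hA : IsCutSide G S A) (hS : S.card = graphConnectivity G)
    (hreg : G.IsRegularOfDegree 4) (hS4 : S.card ≤ 4) {x y z u v : V} (hx : x ∈ S) (hy : y ∈ S)
    (hz : z ∈ S) (hxy : G.Adj x y) (hyz : G.Adj y z) (hzx : G.Adj z x) (hu : u ∈ S) (hv : v ∈ S)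
    (hux : u ≠ x) (hvx : v ≠ x) (hvy : v ≠ y) (hvz : v ≠ z) : ¬G.Adj v u := by
  intro hvu
  rcases eq_or_ne u y with rfl | huy
  · rcases hA.eq_or_eq_of_adj hS hreg hu hx hz hv hzx.ne' hxy.symm hyz hvu.symm with h | h
    exacts [hvx h, hvz h]
  rcases eq_or_ne u z with rfl | huz
  · rcases hA.eq_or_eq_of_adj hS hreg hu hx hy hv hxy.ne hzx hyz.symm hvu.symm with h | h
    exacts [hvx h, hvy h]
  have hsub : ({x, y, z} : Finset V) ⊆ S := by
    simp [Finset.insert_subset_iff, hx, hy, hz]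
  have hcard : (S \ {x, y, z}).card ≤ 1 := by
    rw [Finset.card_sdiff_of_subset hsub,
      Finset.card_eq_three.mpr ⟨x, y, z, hxy.ne, hzx.ne', hyz.ne, rfl⟩]
    omega
  exact hvu.ne (Finset.card_le_one.mp hcard v (by simp [hv, hvx, hvy, hvz]) u
    (by simp [hu, hux, huy, huz]))

theorem isForestyMinimumVertexCut_insert_erase (hA : IsCutSide G S A)
    (hS : S.card = graphConnectivity G) (hreg : G.IsRegularOfDegree 4) (hS4 : S.card ≤ 4)
    {x y z α : V} (hx : x ∈ S) (hy : y ∈ S) (hz : z ∈ S)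
    (hxy : G.Adj x y) (hyz : G.Adj y z) (hzx : G.Adj z x)
    (hα : α ∈ A) (hxα : G.Adj x α) (hαy : ¬G.Adj α y) :
    IsForestyMinimumVertexCut G (insert α (S.erase x)) := by
  have huniq : ∀ s ∈ S, s ∉ S.erase x → ∀ a ∈ A, G.Adj s a → a = α := by
    intro s hs hs' a ha hsa
    obtain rfl : s = x := by_contra fun h => hs' (Finset.mem_erase.mpr ⟨h, hs⟩)
    exact hA.eq_of_adj_of_adj hS hreg hs (Finset.one_lt_card.mpr
      ⟨y, by simp [hy, hxy], z, by simp [hz, hzx.symm], hyz.ne⟩) ha hα hsa hxα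
  -- `α` cannot have all its neighbours in `S`: they would be all of `S`, `y` included.
  have hA' : (A.erase α).Nonempty := by
    obtain ⟨a, haN, haS⟩ : ∃ a ∈ G.neighborFinset α, a ∉ S := by
      by_contra! h
      have := Finset.eq_of_subset_of_card_le h
        (by rw [card_neighborFinset_eq_degree, hreg α]; exact hS4)
      exact hαy ((G.mem_neighborFinset α y).mp (this ▸ hy))
    rw [mem_neighborFinset] at haN
    exact ⟨a, Finset.mem_erase.mpr ⟨haN.ne', hA.mem_of_adj hα haN haS⟩⟩
  refine isForestyMinimumVertexCut_of_card_le (hA.insert_erase hα hA' (Finset.erase_subset x S)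
    hx (Finset.notMem_erase x S) huniq).isVertexCut ?_ ?_
  · rw [← hS, ← Finset.card_erase_add_one hx]
    exact Finset.card_insert_le _ _
  -- Besides `α`, `y`, `z`, the new cut has at most one vertex, and it is a leaf attached to `α`.
  · refine (isAcyclic_induce_triple (c := z) hαy).induce_of_adj_eq fun v hv hvs => ?_
    simp only [Finset.mem_coe, Finset.mem_insert, Finset.mem_erase, Set.mem_insert_iff,
      Set.mem_singleton_iff, not_or] at hv hvs
    obtain ⟨hvx, hvS⟩ := hv.resolve_left hvs.1
    have hleaf : ∀ u ∈ (insert α (S.erase x) : Finset V), G.Adj v u → u = α := by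
      intro u hu hvu
      rw [Finset.mem_insert, Finset.mem_erase] at hu
      exact hu.resolve_right fun ⟨hux, huS⟩ => hA.not_adj_of_triangle hS hreg hS4 hx hy hz
        hxy hyz hzx huS hvS hux hvx hvs.2.1 hvs.2.2 hvu
    intro u hu w hw hvu hvw
    rw [hleaf u hu hvu, hleaf w hw hvw]

theorem card_le_of_common_adj (hA : IsCutSide G S A) (hS : S.card = graphConnectivity G)
    (hreg : G.IsRegularOfDegree 4) {x y α β : V} (hx : x ∈ S) (hy : y ∈ S) (hxy : x ≠ y)
    (hx2 : 1 < (G.neighborFinset x ∩ S).card) (hy2 : 1 < (G.neighborFinset y ∩ S).card)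
    (hα : α ∈ A) (hβ : β ∈ (S ∪ A)ᶜ) (hxα : G.Adj x α) (hyα : G.Adj y α) (hxβ : G.Adj x β)
    (hyβ : G.Adj y β) : Fintype.card V ≤ S.card + 2 := by
  have hB : (S ∪ A)ᶜ = {β} := hA.compl.eq_singleton_of_adj_eq hS hβ hx hy hxy
    (fun b hb hxb => hA.compl.eq_of_adj_of_adj hS hreg hx hx2 hb hβ hxb hxβ)
    (fun b hb hyb => hA.compl.eq_of_adj_of_adj hS hreg hy hy2 hb hβ hyb hyβ)
  have hA₁ : A = {α} := hA.eq_singleton_of_adj_eq hS hα hx hy hxy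
    (fun a ha hxa => hA.eq_of_adj_of_adj hS hreg hx hx2 ha hα hxa hxα)
    (fun a ha hya => hA.eq_of_adj_of_adj hS hreg hy hy2 ha hα hya hyα)
  subst hA₁
  have hcard := Finset.card_add_card_compl (S ∪ {α})
  rw [hB, Finset.card_singleton] at hcard
  have := Finset.card_union_le S {α}
  rw [Finset.card_singleton] at this
  omega

theorem exists_isForestyMinimumVertexCut_of_triangle (hA : IsCutSide G S A)
    (hS : S.card = graphConnectivity G) (hreg : G.IsRegularOfDegree 4) (hS4 : S.card ≤ 4)
    (h7 : 7 ≤ Fintype.card V) {x y z : V} (hx : x ∈ S) (hy : y ∈ S) (hz : z ∈ S)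
    (hxy : G.Adj x y) (hyz : G.Adj y z) (hzx : G.Adj z x) :
    ∃ T, IsForestyMinimumVertexCut G T := by
  obtain ⟨α, hα, hxα⟩ := hA.exists_adj hS hx
  by_cases hαy : G.Adj α y
  swap
  · exact ⟨_, hA.isForestyMinimumVertexCut_insert_erase hS hreg hS4 hx hy hz hxy hyz hzx hα hxα hαy⟩
  obtain ⟨β, hβ, hxβ⟩ := hA.compl.exists_adj hS hx
  by_cases hβy : G.Adj β y
  swap
  · exact ⟨_, hA.compl.isForestyMinimumVertexCut_insert_erase hS hreg hS4 hx hy hz hxy hyz hzx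
      hβ hxβ hβy⟩
  have hx2 : 1 < (G.neighborFinset x ∩ S).card :=
    Finset.one_lt_card.mpr ⟨y, by simp [hy, hxy], z, by simp [hz, hzx.symm], hyz.ne⟩
  have hy2 : 1 < (G.neighborFinset y ∩ S).card :=
    Finset.one_lt_card.mpr ⟨x, by simp [hx, hxy.symm], z, by simp [hz, hyz], hzx.ne'⟩
  have := hA.card_le_of_common_adj hS hreg hx hy hxy.ne hx2 hy2 hα hβ hxα hαy.symm hxβ hβy.symm
  omega

theorem isForestyMinimumVertexCut_neighborFinset (hA : IsCutSide G S A)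
    (hS : S.card = graphConnectivity G) (hreg : G.IsRegularOfDegree 4) (hS4 : 4 ≤ S.card)
    (hV : 6 ≤ Fintype.card V) {s p q a b : V} (hs : s ∈ S) (hp : p ∈ S) (hq : q ∈ S)
    (hpq : p ≠ q) (hsp : G.Adj s p) (hsq : G.Adj s q) (hnpq : ¬G.Adj p q) (ha : a ∈ A)
    (hb : b ∈ (S ∪ A)ᶜ) (hsa : G.Adj s a) (hsb : G.Adj s b) (hpab : ¬(G.Adj p a ∧ G.Adj p b)) :
    IsForestyMinimumVertexCut G (G.neighborFinset s) := by
  have hs2 : 1 < (G.neighborFinset s ∩ S).card :=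
    Finset.one_lt_card.mpr ⟨p, by simp [hp, hsp], q, by simp [hq, hsq], hpq⟩
  have hbA : b ∉ S ∧ b ∉ A := by simpa using hb
  have hab : ¬G.Adj a b := fun h => hbA.2 (hA.mem_of_adj ha h hbA.1)
  have hN : (G.neighborFinset s : Set V) ⊆ {p, q, a, b} := by
    intro u hu
    rw [Finset.mem_coe, mem_neighborFinset] at hu
    by_cases huS : u ∈ S
    · rcases hA.eq_or_eq_of_adj hS hreg hs hp hq huS hpq hsp hsq hu with rfl | rfl <;> simp
    by_cases huA : u ∈ A
    · simp [hA.eq_of_adj_of_adj hS hreg hs hs2 huA ha hu hsa]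
    · simp [hA.compl.eq_of_adj_of_adj hS hreg hs hs2 (by simp [huS, huA]) hb hu hsb]
  refine isForestyMinimumVertexCut_of_card_le (isVertexCut_neighborFinset s (by rw [hreg s]; omega))
    (by rw [card_neighborFinset_eq_degree, hreg s, ← hS]; exact hS4) ?_
  exact (isAcyclic_induce_quadruple hnpq hab hpab).embedding (induceHomOfLE G hN)

theorem exists_isForestyMinimumVertexCut_of_fourCycle (hA : IsCutSide G S A)
    (hS : S.card = graphConnectivity G) (hreg : G.IsRegularOfDegree 4) (hS4 : S.card ≤ 4)
    (h7 : 7 ≤ Fintype.card V) {s₁ s₂ s₃ s₄ : V} (h₁ : s₁ ∈ S) (h₂ : s₂ ∈ S) (h₃ : s₃ ∈ S)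
    (h₄ : s₄ ∈ S) (h₁₂ : G.Adj s₁ s₂) (h₂₃ : G.Adj s₂ s₃) (h₃₄ : G.Adj s₃ s₄)
    (h₄₁ : G.Adj s₄ s₁) (h₁₃ : s₁ ≠ s₃) (h₂₄ : s₂ ≠ s₄) :
    ∃ T, IsForestyMinimumVertexCut G T := by
  obtain ⟨a, ha, h₁a⟩ := hA.exists_adj hS h₁
  obtain ⟨b, hb, h₁b⟩ := hA.compl.exists_adj hS h₁
  by_cases hdeg : G.Adj s₂ a ∧ G.Adj s₂ b
  · have h₁2 : 1 < (G.neighborFinset s₁ ∩ S).card :=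
      Finset.one_lt_card.mpr ⟨s₂, by simp [h₂, h₁₂], s₄, by simp [h₄, h₄₁.symm], h₂₄⟩
    have h₂2 : 1 < (G.neighborFinset s₂ ∩ S).card :=
      Finset.one_lt_card.mpr ⟨s₁, by simp [h₁, h₁₂.symm], s₃, by simp [h₃, h₂₃], h₁₃⟩
    have := hA.card_le_of_common_adj hS hreg h₁ h₂ h₁₂.ne h₁2 h₂2 ha hb h₁a hdeg.1 h₁b hdeg.2
    omega
  have h₂₄' : ¬G.Adj s₂ s₄ := fun h => by
    rcases hA.eq_or_eq_of_adj hS hreg h₂ h₁ h₃ h₄ h₁₃ h₁₂.symm h₂₃ h with h | h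
    exacts [h₄₁.ne h, h₃₄.ne' h]
  have hS4' : 4 ≤ S.card := by
    refine le_of_eq_of_le ?_ (Finset.card_le_card (s := {s₁, s₂, s₃, s₄}) ?_)
    · rw [Finset.card_insert_of_notMem (by simp [h₁₂.ne, h₁₃, h₄₁.ne']),
        Finset.card_insert_of_notMem (by simp [h₂₃.ne, h₂₄]), Finset.card_pair h₃₄.ne]
    · simp [Finset.insert_subset_iff, h₁, h₂, h₃, h₄]
  exact ⟨_, hA.isForestyMinimumVertexCut_neighborFinset hS hreg hS4' (by omega) h₁ h₂ h₄ h₂₄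
    h₁₂ h₄₁.symm h₂₄' ha hb h₁a h₁b hdeg⟩

end

end IsCutSide

theorem four_regular_foresty_minimum_vertex_cut_general
    {V : Type*} [Fintype V] (G : SimpleGraph V)
    (hreg : ∀ v : V, (G.neighborSet v).ncard = 4)
    (h7 : 7 ≤ Fintype.card V) :
    ∃ S : Finset V, IsVertexCut G S ∧ S.card = graphConnectivity G ∧
      (G.induce (S : Set V)).IsAcyclic := by
  classical
  have hreg4 : G.IsRegularOfDegree 4 := fun v => by
    rw [← card_neighborSet_eq_degree, ← Nat.card_eq_fintype_card, Nat.card_coe_set_eq]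
    exact hreg v
  obtain ⟨v⟩ : Nonempty V := Fintype.card_pos_iff.mp (by omega)
  have hv := isVertexCut_neighborFinset (G := G) v (by rw [hreg4 v]; omega)
  obtain ⟨S, hS, hSκ⟩ := exists_isVertexCut_card_eq_graphConnectivity ⟨_, hv⟩
  have hS4 : S.card ≤ 4 := by
    rw [hSκ, ← hreg4 v, ← card_neighborFinset_eq_degree]
    exact graphConnectivity_le hv
  by_cases hac : (G.induce (S : Set V)).IsAcyclic
  · exact ⟨S, hS, hSκ, hac⟩
  obtain ⟨A, hA⟩ := hS.exists_isCutSide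
  rcases exists_triangle_or_fourCycle_of_not_isAcyclic_induce hS4 hac with
    ⟨x, hx, y, hy, z, hz, hxy, hyz, hzx⟩ |
    ⟨s₁, h₁, s₂, h₂, s₃, h₃, s₄, h₄, h₁₂, h₂₃, h₃₄, h₄₁, h₁₃, h₂₄⟩
  · exact hA.exists_isForestyMinimumVertexCut_of_triangle hSκ hreg4 hS4 h7 hx hy hz hxy hyz hzx
  · exact hA.exists_isForestyMinimumVertexCut_of_fourCycle hSκ hreg4 hS4 h7 h₁ h₂ h₃ h₄
      h₁₂ h₂₃ h₃₄ h₄₁ h₁₃ h₂₄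

/-- Every connected 4-regular graph of order at least seven has a foresty
minimum vertex cut. -/
theorem four_regular_foresty_minimum_vertex_cut
    {V : Type*} [Fintype V] (G : SimpleGraph V)
    (hconn : G.Connected)
    (hreg : ∀ v : V, (G.neighborSet v).ncard = 4)
    (h7 : 7 ≤ Fintype.card V) :
    ∃ S : Finset V, IsVertexCut G S ∧ S.card = graphConnectivity G ∧
      (G.induce (S : Set V)).IsAcyclic :=
  four_regular_foresty_minimum_vertex_cut_general G hreg h7
end

section
/- Let n ≥ 7 and let F_n be the graph obtained as follows: take a cycle v_1 v_2 … v_{n-1} v_1 of order n − 1, add all 2-chords v_i v_{i+2} (indices modulo n − 1), and then add a new vertex v_n adjacent exactly to v_1, v_2 and v_3. Then F_n is connected of order n and size 2n + 1, κ(F_n) = 3, and {v_1, v_2, v_3} is the unique minimum vertex cut of F_n; moreover this cut induces a triangle, so F_n has no foresty minimum vertex cut. -/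
/-!
Write `m = n - 1` and `v_i` for the cycle vertices, indices mod `m`. The square of the cycle stays
connected after deleting any set `S` of at most three vertices: walk along the cycle with steps
`+1` and `+2`, which only gets stuck at two consecutive vertices of `S`; if `S` has such a pair,
cut the cycle just after it, and the remaining arc contains at most one vertex of `S`. Hence, as
soon as one of `v_1, v_2, v_3` survives, so does the edge from it to `v_n`, and `F_n - S` is
connected. So `{v_1, v_2, v_3}`, which separates `v_n` from the rest, is the only vertex cut of
size at most 3, and it spans a triangle.
-/

open SimpleGraph

theorem Nat.exists_lt_add_modEq {m : ℕ} (hm : 0 < m) (b x : ℕ) : ∃ α < m, b + α ≡ x [MOD m] := by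
  refine ⟨(x + m * b - b) % m, Nat.mod_lt _ hm, ?_⟩
  have hb : b ≤ m * b := Nat.le_mul_of_pos_left b hm
  calc b + (x + m * b - b) % m ≡ b + (x + m * b - b) [MOD m] := (Nat.mod_modEq _ _).add_left b
    _ = x + m * b := by omega
    _ ≡ x [MOD m] := by simp [Nat.ModEq]

namespace SimpleGraph

variable {V : Type*} {G : SimpleGraph V} {f : ℕ → V}

theorem reachable_induce_compl_of_square_path (h1 : ∀ i, G.Adj (f i) (f (i + 1)))
    (h2 : ∀ i, G.Adj (f i) (f (i + 2))) {s : Set V} {u v : ↥sᶜ} {a b : ℕ} (hab : a ≤ b)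
    (hu : ↑u = f a) (hv : ↑v = f b) (hgap : ∀ j, a ≤ j → j < b → f j ∉ s ∨ f (j + 1) ∉ s) :
    (G.induce sᶜ).Reachable u v := by
  induction b using Nat.strong_induction_on generalizing v with
  | _ b ih =>
    rcases hab.eq_or_lt with rfl | hlt
    · exact (Subtype.ext (hu.trans hv.symm) : u = v) ▸ Reachable.refl u
    obtain ⟨c, rfl⟩ : ∃ c, b = c + 1 := ⟨b - 1, by omega⟩
    by_cases hc : f c ∈ s
    · have hca : c ≠ a := by rintro rfl; exact u.2 (hu ▸ hc)
      obtain ⟨e, rfl⟩ : ∃ e, c = e + 1 := ⟨c - 1, by omega⟩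
      have he : f e ∉ s := (hgap e (by omega) (by omega)).resolve_right (not_not.mpr hc)
      have hue := ih e (by omega) (v := ⟨f e, he⟩) (by omega) rfl
        fun j hj _ => hgap j hj (by omega)
      exact hue.trans (Adj.reachable (by simpa [hv] using h2 e))
    · have huc := ih c (by omega) (v := ⟨f c, hc⟩) (by omega) rfl
        fun j hj _ => hgap j hj (by omega)
      exact huc.trans (Adj.reachable (by simpa [hv] using h1 c))

section SquareOfCycle

variable {m : ℕ} (hf : ∀ i j, f i = f j ↔ i ≡ j [MOD m])
include hf

theorem four_le_card_of_consecutive_pairs_mem {S : Finset V} {d j : ℕ} (hjm : j + 3 < m)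
    (hd : f d ∈ S) (hd1 : f (d + 1) ∈ S) (hj : f (d + 2 + j) ∈ S) (hj1 : f (d + 2 + j + 1) ∈ S) :
    4 ≤ S.card := by
  classical
  have hsub : ({0, 1, j + 2, j + 3} : Finset ℕ).image (fun k => f (d + k)) ⊆ S := by
    simp only [Finset.image_insert, Finset.image_singleton, Finset.insert_subset_iff,
      Finset.singleton_subset_iff, add_zero]
    exact ⟨hd, hd1, by convert hj using 2; omega, by convert hj1 using 2; omega⟩
  have hinj : Set.InjOn (fun k => f (d + k)) ({0, 1, j + 2, j + 3} : Finset ℕ) := by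
    intro k hk l hl hkl
    simp only [Finset.coe_insert, Finset.coe_singleton, Set.mem_insert_iff,
      Set.mem_singleton_iff] at hk hl
    have := Nat.ModEq.add_left_cancel' d ((hf _ _).mp hkl)
    rwa [Nat.ModEq, Nat.mod_eq_of_lt (by omega), Nat.mod_eq_of_lt (by omega)] at this
  have h4 : ({0, 1, j + 2, j + 3} : Finset ℕ).card = 4 := by
    rw [Finset.card_insert_of_notMem, Finset.card_insert_of_notMem, Finset.card_pair] <;> simp
  calc 4 = (({0, 1, j + 2, j + 3} : Finset ℕ).image (fun k => f (d + k))).card := by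
        rw [Finset.card_image_of_injOn hinj, h4]
    _ ≤ S.card := Finset.card_le_card hsub

-- Cut the cycle just after a pair of consecutive vertices of `S`, if there is one: what is left
-- is an arc `f b, …, f (b + L)` through every vertex outside `S`, with no two consecutive
-- vertices in `S`.
theorem exists_arc_of_card_le_three (hm : 0 < m) {S : Finset V} (hS : S.card ≤ 3) :
    ∃ b L, (∀ x, f x ∉ S → ∃ α ≤ L, f (b + α) = f x) ∧
      ∀ j < L, f (b + j) ∉ S ∨ f (b + j + 1) ∉ S := by
  by_cases hpair : ∃ d, f d ∈ S ∧ f (d + 1) ∈ S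
  · obtain ⟨d, hd, hd1⟩ := hpair
    refine ⟨d + 2, m - 3, fun x hx => ?_, fun j hj => ?_⟩
    · obtain ⟨α, hαm, hα⟩ := Nat.exists_lt_add_modEq hm (d + 2) x
      refine ⟨α, ?_, (hf _ _).mpr hα⟩
      by_contra hαL
      have : d + 2 + α = d + m ∨ d + 2 + α = d + 1 + m := by omega
      refine hx (((hf _ _).mpr hα).symm ▸ ?_)
      rcases this with h | h <;> rw [h, (hf _ _).mpr Nat.add_modEq_right] <;> assumption
    · by_contra! hj2
      have := four_le_card_of_consecutive_pairs_mem hf (by omega) hd hd1 hj2.1 hj2.2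
      omega
  · push Not at hpair
    refine ⟨0, m - 1, fun x _ => ⟨x % m, by have := Nat.mod_lt x hm; omega, ?_⟩,
      fun j _ => not_and_or.mp fun h => hpair _ h.1 h.2⟩
    rw [zero_add, hf]
    exact Nat.mod_modEq x m

theorem reachable_induce_compl_of_square_cycle (h1 : ∀ i, G.Adj (f i) (f (i + 1)))
    (h2 : ∀ i, G.Adj (f i) (f (i + 2))) (hm : 0 < m) {S : Finset V} (hS : S.card ≤ 3)
    {u v : ↥(↑S : Set V)ᶜ} {x y : ℕ} (hu : ↑u = f x) (hv : ↑v = f y) :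
    (G.induce (↑S)ᶜ).Reachable u v := by
  obtain ⟨b, L, hcover, hgap⟩ := exists_arc_of_card_le_three hf hm hS
  obtain ⟨α, hαL, hα⟩ := hcover x (hu ▸ u.2)
  obtain ⟨β, hβL, hβ⟩ := hcover y (hv ▸ v.2)
  have key : ∀ {u v : ↥(↑S : Set V)ᶜ} {α β}, α ≤ β → β ≤ L → ↑u = f (b + α) → ↑v = f (b + β) →
      (G.induce (↑S)ᶜ).Reachable u v := fun hαβ hβL hu hv =>
    reachable_induce_compl_of_square_path (f := fun j => f (b + j)) (fun i => h1 (b + i))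
      (fun i => h2 (b + i)) hαβ hu hv fun j _ hj => hgap j (by omega)
  rcases le_total α β with h | h
  · exact key h hβL (hu.trans hα.symm) (hv.trans hβ.symm)
  · exact (key h hαL (hv.trans hβ.symm) (hu.trans hα.symm)).symm

end SquareOfCycle

theorem not_connected_induce_compl_of_neighborSet_subset {s : Set V} {u v : V} (hu : u ∉ s)
    (hv : v ∉ s) (huv : u ≠ v) (hnbr : G.neighborSet v ⊆ s) : ¬ (G.induce sᶜ).Connected := by
  intro hconn
  obtain ⟨p⟩ := hconn.preconnected ⟨v, hv⟩ ⟨u, hu⟩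
  have hadj := p.adj_snd (Walk.not_nil_of_ne fun h => huv (congrArg Subtype.val h).symm)
  exact p.snd.2 (hnbr hadj)

theorem not_isAcyclic_induce_of_adj {s : Set V} {a b c : V} (ha : a ∈ s) (hb : b ∈ s)
    (hc : c ∈ s) (hab : G.Adj a b) (hac : G.Adj a c) (hbc : G.Adj b c) :
    ¬ (G.induce s).IsAcyclic := by
  classical
  exact fun h => h.cliqueFree le_rfl _
    ((is3Clique_triple_iff (G := G.induce s) (a := ⟨a, ha⟩) (b := ⟨b, hb⟩) (c := ⟨c, hc⟩)).mpr
      ⟨hab, hac, hbc⟩)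

end SimpleGraph

theorem graphConnectivity_eq_card {V : Type*} [Fintype V] {G : SimpleGraph V} {S : Finset V}
    (hS : IsVertexCut G S) (hmin : ∀ T, IsVertexCut G T → S.card ≤ T.card) :
    graphConnectivity G = S.card := by
  refine le_antisymm (Nat.sInf_le ⟨S, hS, rfl⟩) ?_
  obtain ⟨T, hT, hTcard⟩ :=
    Nat.sInf_mem (s := {k | ∃ T, IsVertexCut G T ∧ T.card = k}) ⟨_, S, hS, rfl⟩
  rw [graphConnectivity, ← hTcard]
  exact hmin T hT

-- `F_n`, with `v_i` the vertex `i - 1`: the cycle runs through `0, …, n - 2`, and the apex `v_n` is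
-- `n - 1`.
def graphF (n : ℕ) : SimpleGraph (Fin n) := SimpleGraph.fromRel (fun a b =>
  (a.val < n - 1 ∧ b.val < n - 1 ∧ b.val = (a.val + 1) % (n - 1)) ∨
  (a.val < n - 1 ∧ b.val < n - 1 ∧ b.val = (a.val + 2) % (n - 1)) ∨
  (a.val = n - 1 ∧ b.val < 3))

namespace graphF

variable {n : ℕ}

def cycleVertex (hn : 2 ≤ n) (i : ℕ) : Fin n :=
  ⟨i % (n - 1), by have := Nat.mod_lt i (by omega : 0 < n - 1); omega⟩

def apex (hn : 1 ≤ n) : Fin n := ⟨n - 1, by omega⟩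

theorem cycleVertex_eq_iff (hn : 2 ≤ n) {i j : ℕ} :
    cycleVertex hn i = cycleVertex hn j ↔ i ≡ j [MOD n - 1] :=
  Fin.ext_iff

theorem cycleVertex_of_lt (hn : 2 ≤ n) {i : ℕ} (hi : i < n - 1) :
    cycleVertex hn i = ⟨i, by omega⟩ :=
  Fin.ext (Nat.mod_eq_of_lt hi)

theorem val_cycleVertex_lt (hn : 2 ≤ n) (i : ℕ) : (cycleVertex hn i).val < n - 1 :=
  Nat.mod_lt i (by omega)

theorem cycleVertex_ne_add (hn : 2 ≤ n) (i : ℕ) {k : ℕ} (hk : 0 < k) (hkn : k < n - 1) :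
    cycleVertex hn i ≠ cycleVertex hn (i + k) := by
  rw [Ne, cycleVertex_eq_iff, Nat.ModEq.comm, Nat.add_modEq_left_iff]
  exact Nat.not_dvd_of_pos_of_lt hk hkn

theorem val_cycleVertex_add (hn : 2 ≤ n) (i k : ℕ) :
    (cycleVertex hn (i + k)).val = ((cycleVertex hn i).val + k) % (n - 1) :=
  (Nat.mod_add_mod i (n - 1) k).symm

theorem adj_cycleVertex_succ (hn : 3 ≤ n) (i : ℕ) :
    (graphF n).Adj (cycleVertex (by omega) i) (cycleVertex (by omega) (i + 1)) :=
  (fromRel_adj _ _ _).mpr ⟨cycleVertex_ne_add _ i one_pos (by omega), .inl <| .inl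
    ⟨val_cycleVertex_lt _ i, val_cycleVertex_lt _ _, val_cycleVertex_add _ i 1⟩⟩

theorem adj_cycleVertex_add_two (hn : 4 ≤ n) (i : ℕ) :
    (graphF n).Adj (cycleVertex (by omega) i) (cycleVertex (by omega) (i + 2)) :=
  (fromRel_adj _ _ _).mpr ⟨cycleVertex_ne_add _ i two_pos (by omega), .inl <| .inr <| .inl
    ⟨val_cycleVertex_lt _ i, val_cycleVertex_lt _ _, val_cycleVertex_add _ i 2⟩⟩

theorem apex_adj_iff (hn : 4 ≤ n) {w : Fin n} :
    (graphF n).Adj (apex (by omega)) w ↔ w.val < 3 := by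
  simp only [graphF, apex, fromRel_adj, ne_eq, Fin.ext_iff, lt_self_iff_false, false_and,
    true_and, and_false, false_or]
  omega

theorem induce_compl_connected (hn : 4 ≤ n) {S : Finset (Fin n)} (hS : S.card ≤ 3) {w : Fin n}
    (hw : w.val < 3) (hwS : w ∉ S) : ((graphF n).induce (↑S)ᶜ).Connected := by
  refine (connected_iff_exists_forall_reachable _).mpr ⟨⟨w, hwS⟩, fun u => Reachable.symm ?_⟩
  by_cases hu : u.val = apex (by omega)
  · exact Adj.reachable (by simpa [hu] using (apex_adj_iff hn).mpr hw)
  have hu' : u.val.val < n - 1 := by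
    have : u.val.val ≠ n - 1 := fun h => hu (Fin.ext h)
    omega
  exact reachable_induce_compl_of_square_cycle (fun _ _ => cycleVertex_eq_iff (by omega))
    (adj_cycleVertex_succ (by omega)) (adj_cycleVertex_add_two hn) (by omega) hS
    (cycleVertex_of_lt (by omega) hu').symm (cycleVertex_of_lt (by omega) (by omega)).symm

theorem isVertexCut_triangle (hn : 5 ≤ n) :
    IsVertexCut (graphF n) {⟨0, by omega⟩, ⟨1, by omega⟩, ⟨2, by omega⟩} := by
  have h3 : (⟨3, by omega⟩ : Fin n) ∉
      ({⟨0, by omega⟩, ⟨1, by omega⟩, ⟨2, by omega⟩} : Finset (Fin n)) := by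
    simp [Fin.ext_iff]
  refine ⟨fun h => h3 (Set.eq_univ_iff_forall.mp h _), ?_⟩
  refine not_connected_induce_compl_of_neighborSet_subset h3 (v := apex (by omega)) ?_ ?_ ?_
  · simp only [Finset.coe_insert, Finset.coe_singleton, Set.mem_insert_iff, Set.mem_singleton_iff,
      apex, Fin.ext_iff]
    omega
  · simp only [Ne, apex, Fin.ext_iff]
    omega
  · intro w hw
    have := (apex_adj_iff (by omega)).mp hw
    simp only [Finset.coe_insert, Finset.coe_singleton, Set.mem_insert_iff, Set.mem_singleton_iff,
      Fin.ext_iff]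
    omega

theorem triangle_subset_of_isVertexCut (hn : 4 ≤ n) {S : Finset (Fin n)}
    (hS : IsVertexCut (graphF n) S) (hcard : S.card ≤ 3) :
    {⟨0, by omega⟩, ⟨1, by omega⟩, ⟨2, by omega⟩} ⊆ S := by
  by_contra h
  obtain ⟨w, hw, hwS⟩ := Finset.not_subset.mp h
  exact hS.2 (induce_compl_connected hn hcard (by simp [Fin.ext_iff] at hw; omega) hwS)

theorem adj_of_lt (hn : 4 ≤ n) {i j : ℕ} (hij : i < j) (hji : j ≤ i + 2) (hj : j < n - 1) :
    (graphF n).Adj ⟨i, by omega⟩ ⟨j, by omega⟩ := by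
  obtain ⟨k, rfl⟩ : ∃ k, j = i + k := ⟨j - i, by omega⟩
  obtain rfl | rfl : k = 1 ∨ k = 2 := by omega
  · simpa only [cycleVertex_of_lt _ (by omega : i < n - 1), cycleVertex_of_lt _ hj]
      using adj_cycleVertex_succ (n := n) (by omega) i
  · simpa only [cycleVertex_of_lt _ (by omega : i < n - 1), cycleVertex_of_lt _ hj]
      using adj_cycleVertex_add_two hn i

theorem edgeSet_ncard (hn : 6 ≤ n) : (graphF n).edgeSet.ncard = 2 * n + 1 := by
  let v := cycleVertex (n := n) (by omega)
  let e : Fin (n - 1) ⊕ Fin (n - 1) ⊕ Fin 3 → Sym2 (Fin n)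
    | .inl i => s(v i, v (i + 1))
    | .inr (.inl i) => s(v i, v (i + 2))
    | .inr (.inr t) => s(apex (by omega), v t)
  have hrange : Set.range e = (graphF n).edgeSet := by
    refine Set.Subset.antisymm (Set.range_subset_iff.mpr ?_) fun x hx => ?_
    · rintro (i | i | t)
      · exact adj_cycleVertex_succ (by omega) i
      · exact adj_cycleVertex_add_two (by omega) i
      · exact (apex_adj_iff (by omega)).mpr
          (by simp [v, cycleVertex_of_lt _ (by omega : t.val < n - 1)])
    induction x using Sym2.ind with | _ a b => ?_
    rw [mem_edgeSet, graphF, fromRel_adj] at hx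
    obtain ⟨-, (⟨ha, -, hb⟩ | ⟨ha, -, hb⟩ | ⟨ha, hb⟩) |
      (⟨hb, -, ha⟩ | ⟨hb, -, ha⟩ | ⟨hb, ha⟩)⟩ := hx
    · exact ⟨.inl ⟨a, ha⟩, by simp [e, v, cycleVertex, Fin.ext_iff, Nat.mod_eq_of_lt ha, hb]⟩
    · exact ⟨.inr (.inl ⟨a, ha⟩), by simp [e, v, cycleVertex, Fin.ext_iff, Nat.mod_eq_of_lt ha, hb]⟩
    · exact ⟨.inr (.inr ⟨b, hb⟩), by
        simp [e, v, cycleVertex_of_lt _ (by omega : b.val < n - 1), apex, Fin.ext_iff, ha]⟩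
    · exact ⟨.inl ⟨b, hb⟩, by simp [e, v, cycleVertex, Fin.ext_iff, Nat.mod_eq_of_lt hb, ha]⟩
    · exact ⟨.inr (.inl ⟨b, hb⟩), by simp [e, v, cycleVertex, Fin.ext_iff, Nat.mod_eq_of_lt hb, ha]⟩
    · exact ⟨.inr (.inr ⟨a, ha⟩), by
        simp [e, v, cycleVertex_of_lt _ (by omega : a.val < n - 1), apex, Fin.ext_iff, hb]⟩
  have hinj : Function.Injective e := by
    have hmod : ∀ (i : Fin (n - 1)) {k}, k < n - 1 →
        (i + k) % (n - 1) = if n - 1 ≤ i + k then i + k - (n - 1) else i + k := fun i k hk => by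
      rw [Nat.add_mod_eq_ite, Nat.mod_eq_of_lt i.isLt, Nat.mod_eq_of_lt hk]
    have hmod3 : ∀ t : Fin 3, t % (n - 1) = t := fun t => Nat.mod_eq_of_lt (by omega)
    rintro (i | i | t) (j | j | u) h <;>
      simp only [e, v, Sym2.eq_iff, Fin.ext_iff, cycleVertex, apex, Sum.inl.injEq, Sum.inr.injEq,
        reduceCtorEq, Nat.mod_eq_of_lt, Fin.is_lt, hmod _ (by omega : 1 < n - 1),
        hmod _ (by omega : 2 < n - 1), hmod3] at h ⊢ <;>
      (try split_ifs at h) <;> omega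
  rw [← hrange, Set.ncard_range_of_injective hinj, Nat.card_eq_fintype_card]
  simp only [Fintype.card_sum, Fintype.card_fin]
  omega

end graphF

/-- The graph `F_n` (a cycle `v_1 ⋯ v_{n-1} v_1` with all 2-chords added, plus
a new vertex `v_n` joined to `v_1, v_2, v_3`; here `v_i` is the vertex
`i - 1 : Fin n`) is connected, has order `n` and size `2n + 1`, has
connectivity 3, its unique minimum vertex cut is `{v_1, v_2, v_3}`, which
induces a triangle, and it has no foresty minimum vertex cut. -/
theorem F_n_no_foresty_minimum_vertex_cut
    (n : ℕ) (h7 : 7 ≤ n) (F : SimpleGraph (Fin n))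
    (hF : F = SimpleGraph.fromRel (fun a b =>
        (a.val < n - 1 ∧ b.val < n - 1 ∧ b.val = (a.val + 1) % (n - 1)) ∨
        (a.val < n - 1 ∧ b.val < n - 1 ∧ b.val = (a.val + 2) % (n - 1)) ∨
        (a.val = n - 1 ∧ b.val < 3))) :
    F.Connected ∧ Fintype.card (Fin n) = n ∧ F.edgeSet.ncard = 2 * n + 1 ∧
    graphConnectivity F = 3 ∧
    (∀ S : Finset (Fin n), IsVertexCut F S → S.card = graphConnectivity F →
      S = {⟨0, by omega⟩, ⟨1, by omega⟩, ⟨2, by omega⟩}) ∧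
    F.Adj ⟨0, by omega⟩ ⟨1, by omega⟩ ∧
    F.Adj ⟨1, by omega⟩ ⟨2, by omega⟩ ∧
    F.Adj ⟨0, by omega⟩ ⟨2, by omega⟩ ∧
    ¬ ∃ S : Finset (Fin n), IsVertexCut F S ∧ S.card = graphConnectivity F ∧
      (F.induce (S : Set (Fin n))).IsAcyclic := by
  obtain rfl : F = graphF n := hF
  set T : Finset (Fin n) := {⟨0, by omega⟩, ⟨1, by omega⟩, ⟨2, by omega⟩}
  have hT : T.card = 3 := by simp [T, Fin.ext_iff]
  have hκ : graphConnectivity (graphF n) = 3 := by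
    rw [← hT]
    refine graphConnectivity_eq_card (graphF.isVertexCut_triangle (by omega)) fun S hS => ?_
    by_contra! hS3
    exact hS3.not_ge (Finset.card_le_card
      (graphF.triangle_subset_of_isVertexCut (by omega) hS (hS3.trans_eq hT).le))
  have hmin : ∀ S, IsVertexCut (graphF n) S → S.card = graphConnectivity (graphF n) → S = T :=
    fun S hS hcard => (Finset.eq_of_subset_of_card_le
      (graphF.triangle_subset_of_isVertexCut (by omega) hS (hcard.trans hκ).le)
      (hcard.trans (hκ.trans hT.symm)).le).symm
  have h01 : (graphF n).Adj ⟨0, by omega⟩ ⟨1, by omega⟩ :=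
    graphF.adj_of_lt (by omega) (by omega) (by omega) (by omega)
  have h12 : (graphF n).Adj ⟨1, by omega⟩ ⟨2, by omega⟩ :=
    graphF.adj_of_lt (by omega) (by omega) (by omega) (by omega)
  have h02 : (graphF n).Adj ⟨0, by omega⟩ ⟨2, by omega⟩ :=
    graphF.adj_of_lt (by omega) (by omega) (by omega) (by omega)
  refine ⟨?_, Fintype.card_fin n, graphF.edgeSet_ncard (by omega), hκ, hmin, h01, h12, h02, ?_⟩
  · have := graphF.induce_compl_connected (n := n) (S := ∅) (w := ⟨0, by omega⟩) (by omega)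
      (by simp) (by simp) (Finset.notMem_empty _)
    rw [Finset.coe_empty, Set.compl_empty] at this
    exact (induceUnivIso _).connected_iff.mp this
  · rintro ⟨S, hS, hcard, hacyc⟩
    rw [hmin S hS hcard] at hacyc
    exact not_isAcyclic_induce_of_adj (by simp [T]) (by simp [T]) (by simp [T]) h01 h02 h12 hacyc
end

section
/- Let n ≥ 8 be even and let G_n be the graph obtained from a cycle D: v_1 v_2 … v_n v_1 of order n by adding the edges v_2 v_{n/2}, v_{(n+4)/2} v_n, and v_i v_{n+2-i} for i = 2, 3, …, n/2. Then G_n is connected of order n and size 3n/2 + 1, and G_n has exactly two minimum vertex cuts, namely {v_2, v_n} and {v_{n/2}, v_{(n+4)/2}}, each of which induces an edge; hence G_n has no independent minimum vertex cut. -/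
/-!
Number the vertices `0, …, n - 1`, so that `v_i` is `i - 1`. Then `G_n` is the Hamiltonian cycle
`0 1 ⋯ (n-1) 0` together with the rungs `i (n - i)` for `1 ≤ i < n / 2` and the two extra edges
`1 (n/2 - 1)` and `(n/2 + 1) (n - 1)`.

Removing one vertex from a graph containing a Hamiltonian cycle leaves a path, so `κ(G_n) ≥ 2`.
Removing two vertices `x < y` leaves the two arcs of the cycle strictly between them, each
spanning a connected subgraph, so the rest is connected as soon as some edge joins the two arcs.
A rung next to `x` or `y`, or one of the two extra edges, always does so, except for the pairs
`{1, n - 1}` and `{n/2 - 1, n/2 + 1}`. These are the neighbourhoods of the degree-two vertices `0`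
and `n / 2`, hence cuts, and each is itself a rung.
-/

open SimpleGraph

section VertexCut

variable {V : Type*} [Fintype V] {G : SimpleGraph V}

lemma graphConnectivity_eq_of_isVertexCut {S : Finset V} (hS : IsVertexCut G S)
    (hmin : ∀ T : Finset V, IsVertexCut G T → S.card ≤ T.card) :
    graphConnectivity G = S.card :=
  le_antisymm (Nat.sInf_le ⟨S, hS, rfl⟩)
    (le_csInf ⟨_, S, hS, rfl⟩ fun _ ⟨T, hT, hk⟩ => hk ▸ hmin T hT)

lemma isVertexCut_of_neighborSet_subset {S : Finset V} {v w : V} (hv : v ∉ S) (hw : w ∉ S)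
    (hvw : v ≠ w) (hN : G.neighborSet v ⊆ S) : IsVertexCut G S := by
  refine ⟨fun h => hv (Finset.mem_coe.mp (h ▸ Set.mem_univ v)), fun hconn => ?_⟩
  obtain ⟨p⟩ := hconn.preconnected ⟨v, hv⟩ ⟨w, hw⟩
  cases p with
  | nil => exact hvw rfl
  | @cons _ u _ h _ => exact u.2 (hN (comap_adj.mp h))

lemma not_isVertexCut_empty (hG : G.Connected) : ¬ IsVertexCut G ∅ := fun h =>
  h.2 (by rw [Finset.coe_empty, Set.compl_empty]; exact (induceUnivIso G).connected_iff.mpr hG)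

end VertexCut

lemma ncard_edgeSet_eq_ncard_lt_adj {V : Type*} [LinearOrder V] (G : SimpleGraph V) :
    G.edgeSet.ncard = {p : V × V | p.1 < p.2 ∧ G.Adj p.1 p.2}.ncard := by
  symm
  refine Set.ncard_congr (fun p _ => s(p.1, p.2)) (fun p hp => hp.2) ?_ ?_
  · rintro ⟨a, b⟩ ⟨c, d⟩ ⟨hab, -⟩ ⟨hcd, -⟩ h
    rcases Sym2.eq_iff.mp h with ⟨rfl, rfl⟩ | ⟨rfl, rfl⟩
    · rfl
    · exact absurd (hab.trans hcd) (lt_irrefl _)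
  · intro e he
    induction e using Sym2.ind with
    | _ a b =>
      rcases lt_trichotomy a b with hab | rfl | hba
      · exact ⟨(a, b), ⟨hab, he⟩, rfl⟩
      · exact absurd he (G.loopless.irrefl a)
      · exact ⟨(b, a), ⟨hba, he.symm⟩, Sym2.eq_swap⟩

section HamiltonianCycle

variable {n : ℕ} {G : SimpleGraph (Fin n)}

lemma connected_induce_preimage_Ico (hP : pathGraph n ≤ G) {lo : ℕ} :
    ∀ {hi : ℕ}, lo < hi → hi ≤ n → (G.induce (Fin.val ⁻¹' Set.Ico lo hi)).Connected
  | 0, h, _ => absurd h (Nat.not_lt_zero lo)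
  | hi + 1, hlt, hhi => by
    rcases (Nat.lt_succ_iff.mp hlt).eq_or_lt with rfl | hlt
    · have : Fin.val ⁻¹' Set.Ico lo (lo + 1) = {(⟨lo, hhi⟩ : Fin n)} := by
        ext v
        simp only [Set.mem_preimage, Set.mem_Ico, Set.mem_singleton_iff, Fin.ext_iff]
        omega
      rw [this]
      exact Connected.of_subsingleton
    · have : Fin.val ⁻¹' Set.Ico lo (hi + 1) =
          Fin.val ⁻¹' Set.Ico lo hi ∪ {(⟨hi, hhi⟩ : Fin n)} := by
        ext v
        simp only [Set.mem_union, Set.mem_preimage, Set.mem_Ico, Set.mem_singleton_iff, Fin.ext_iff]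
        omega
      rw [this]
      refine connected_induce_union (v := ⟨hi - 1, by omega⟩)
        (connected_induce_preimage_Ico hP hlt (by omega)).preconnected
        Preconnected.of_subsingleton (by simp only [Set.mem_preimage, Set.mem_Ico]; omega) rfl
        (hP (pathGraph_adj.mpr (Or.inl (Nat.sub_add_cancel (by omega)))))

lemma cycleGraph_adj_last_zero (hn : 2 ≤ n) {u v : Fin n} (hu : u.1 = n - 1) (hv : v.1 = 0) :
    (cycleGraph n).Adj u v := by
  rw [cycleGraph_adj', Fin.coe_sub_iff_lt.mpr (by omega : v < u)]
  omega

lemma cycleGraph_le_of_adj (hsucc : ∀ u v : Fin n, v.1 = u.1 + 1 → G.Adj u v)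
    (hwrap : ∀ u v : Fin n, u.1 = n - 1 → v.1 = 0 → G.Adj u v) : cycleGraph n ≤ G := by
  have hsub : ∀ u v : Fin n, (u - v).val = 1 → G.Adj u v := by
    intro u v h
    rcases le_or_gt v u with hvu | huv
    · rw [Fin.coe_sub_iff_le.mpr hvu] at h
      exact (hsucc v u (by omega)).symm
    · rw [Fin.coe_sub_iff_lt.mpr huv] at h
      exact (hwrap v u (by omega) (by omega)).symm
  intro u v h
  rcases cycleGraph_adj'.mp h with h | h
  · exact hsub u v h
  · exact (hsub v u h).symm

lemma connected_of_cycleGraph_le [NeZero n] (hC : cycleGraph n ≤ G) : G.Connected := by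
  obtain ⟨m, rfl⟩ := Nat.exists_eq_succ_of_ne_zero (NeZero.ne n)
  exact cycleGraph_connected.mono hC

lemma connected_induce_outer_arc (hC : cycleGraph n ≤ G) {a b : ℕ} (hab : a ≤ b)
    (hbn : b ≤ n) (hne : 0 < a ∨ b < n) :
    (G.induce {v : Fin n | v.1 < a ∨ b ≤ v.1}).Connected := by
  have hP : pathGraph n ≤ G := pathGraph_le_cycleGraph.trans hC
  by_cases ha : a = 0
  · have : {v : Fin n | v.1 < a ∨ b ≤ v.1} = Fin.val ⁻¹' Set.Ico b n := by
      ext v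
      simp only [Set.mem_preimage, Set.mem_Ico, Set.mem_ofPred_eq]
      omega
    rw [this]
    exact connected_induce_preimage_Ico hP (by omega) le_rfl
  by_cases hb : b = n
  · have : {v : Fin n | v.1 < a ∨ b ≤ v.1} = Fin.val ⁻¹' Set.Ico 0 a := by
      ext v
      simp only [Set.mem_preimage, Set.mem_Ico, Set.mem_ofPred_eq]
      omega
    rw [this]
    exact connected_induce_preimage_Ico hP (by omega) (by omega)
  have : {v : Fin n | v.1 < a ∨ b ≤ v.1} =
      Fin.val ⁻¹' Set.Ico b n ∪ Fin.val ⁻¹' Set.Ico 0 a := by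
    ext v
    simp only [Set.mem_union, Set.mem_preimage, Set.mem_Ico, Set.mem_ofPred_eq]
    omega
  rw [this]
  exact connected_induce_union (v := ⟨n - 1, by omega⟩) (w := ⟨0, by omega⟩)
    (connected_induce_preimage_Ico hP (by omega) le_rfl).preconnected
    (connected_induce_preimage_Ico hP (by omega) (by omega)).preconnected
    (by simp only [Set.mem_preimage, Set.mem_Ico]; omega)
    (by simp only [Set.mem_preimage, Set.mem_Ico]; omega)
    (hC (cycleGraph_adj_last_zero (by omega) rfl rfl))

lemma connected_induce_compl_singleton (hC : cycleGraph n ≤ G) (hn : 2 ≤ n) (x : Fin n) :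
    (G.induce ({x}ᶜ : Set (Fin n))).Connected := by
  have : ({x}ᶜ : Set (Fin n)) = {v : Fin n | v.1 < x.1 ∨ x.1 + 1 ≤ v.1} := by
    ext v
    simp only [Set.mem_compl_iff, Set.mem_singleton_iff, Set.mem_ofPred_eq, Fin.ext_iff]
    omega
  rw [this]
  exact connected_induce_outer_arc hC (by omega) x.2 (by omega)

lemma connected_induce_compl_pair (hC : cycleGraph n ≤ G) (hn : 3 ≤ n) {x y : Fin n}
    (hxy : x < y)
    (hchord : x.1 + 1 < y.1 → (0 < x.1 ∨ y.1 + 1 < n) →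
      ∃ u w : Fin n, (x < u ∧ u < y) ∧ (w < x ∨ y < w) ∧ G.Adj u w) :
    (G.induce ({x, y}ᶜ : Set (Fin n))).Connected := by
  have hP : pathGraph n ≤ G := pathGraph_le_cycleGraph.trans hC
  by_cases hinner : x.1 + 1 = y.1
  · have : ({x, y}ᶜ : Set (Fin n)) = {v : Fin n | v.1 < x.1 ∨ y.1 + 1 ≤ v.1} := by
      ext v
      simp only [Set.mem_compl_iff, Set.mem_insert_iff, Set.mem_singleton_iff,
        Set.mem_ofPred_eq, Fin.ext_iff]
      omega
    rw [this]
    exact connected_induce_outer_arc hC (by omega) y.2 (by omega)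
  by_cases houter : x.1 = 0 ∧ y.1 = n - 1
  · have : ({x, y}ᶜ : Set (Fin n)) = Fin.val ⁻¹' Set.Ico (x.1 + 1) y.1 := by
      ext v
      simp only [Set.mem_compl_iff, Set.mem_insert_iff, Set.mem_singleton_iff,
        Set.mem_preimage, Set.mem_Ico, Fin.ext_iff]
      omega
    rw [this]
    exact connected_induce_preimage_Ico hP (by omega) (by omega)
  have : ({x, y}ᶜ : Set (Fin n)) =
      Fin.val ⁻¹' Set.Ico (x.1 + 1) y.1 ∪ {v : Fin n | v.1 < x.1 ∨ y.1 + 1 ≤ v.1} := by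
    ext v
    simp only [Set.mem_compl_iff, Set.mem_insert_iff, Set.mem_singleton_iff, Set.mem_union,
      Set.mem_preimage, Set.mem_Ico, Set.mem_ofPred_eq, Fin.ext_iff]
    omega
  rw [this]
  obtain ⟨u, w, hu, hw, huw⟩ := hchord (by omega) (by omega)
  exact connected_induce_union
    (connected_induce_preimage_Ico hP (by omega) (by omega)).preconnected
    (connected_induce_outer_arc hC (by omega) y.2 (by omega)).preconnected
    (by simp only [Set.mem_preimage, Set.mem_Ico]; omega)
    (by simp only [Set.mem_ofPred_eq]; omega) huw

end HamiltonianCycle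

lemma Nat.eq_add_one_mod_iff {a b n : ℕ} (ha : a < n) (hb : b < n) :
    b = (a + 1) % n ↔ b = a + 1 ∨ (a = n - 1 ∧ b = 0) := by
  by_cases h : a + 1 = n
  · rw [h, Nat.mod_self]; omega
  · rw [Nat.mod_eq_of_lt (by omega)]; omega

namespace Gn

def graph (n : ℕ) : SimpleGraph (Fin n) := SimpleGraph.fromRel (fun a b =>
  (b.val = (a.val + 1) % n) ∨
  (a.val = 1 ∧ b.val = n / 2 - 1) ∨
  (a.val = n / 2 + 1 ∧ b.val = n - 1) ∨
  (1 ≤ a.val ∧ a.val ≤ n / 2 - 1 ∧ b.val = n - a.val))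

/-- The relation defining `graph n`, on vertex numbers and without `% n`, so that `omega`
can decide it. -/
def IsEdge (n x y : ℕ) : Prop :=
  (y = x + 1 ∨ (x = n - 1 ∧ y = 0)) ∨
  (x = 1 ∧ y = n / 2 - 1) ∨
  (x = n / 2 + 1 ∧ y = n - 1) ∨
  (1 ≤ x ∧ x ≤ n / 2 - 1 ∧ y = n - x)

variable {n : ℕ}

lemma adj_iff (h8 : 8 ≤ n) {a b : Fin n} :
    (graph n).Adj a b ↔ IsEdge n a b ∨ IsEdge n b a := by
  simp only [graph, fromRel_adj, Nat.eq_add_one_mod_iff a.2 b.2, Nat.eq_add_one_mod_iff b.2 a.2]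
  refine and_iff_right_of_imp fun h hab => ?_
  subst hab
  omega

lemma cycleGraph_le (h8 : 8 ≤ n) : cycleGraph n ≤ graph n :=
  cycleGraph_le_of_adj (fun _ _ h => (adj_iff h8).mpr (Or.inl (Or.inl (Or.inl h))))
    (fun _ _ hu hv => (adj_iff h8).mpr (Or.inl (Or.inl (Or.inr ⟨hu, hv⟩))))

lemma connected (h8 : 8 ≤ n) : (graph n).Connected :=
  have : NeZero n := ⟨by omega⟩
  connected_of_cycleGraph_le (cycleGraph_le h8)

/-- Every edge once, as (smaller end, larger end): the path edges, the rungs, and the closing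
edge of the cycle together with the two extra edges. -/
def edgePairs (n : ℕ) : Finset (ℕ × ℕ) :=
  (Finset.range (n - 1)).image (fun i => (i, i + 1)) ∪
    (Finset.Ico 1 (n / 2)).image (fun i => (i, n - i)) ∪
    {(0, n - 1), (1, n / 2 - 1), (n / 2 + 1, n - 1)}

lemma image_val_lt_adj (h8 : 8 ≤ n) :
    Prod.map Fin.val Fin.val '' {p : Fin n × Fin n | p.1 < p.2 ∧ (graph n).Adj p.1 p.2} =
      edgePairs n := by
  ext ⟨x, y⟩
  simp only [adj_iff h8, Set.mem_image, Set.mem_ofPred_eq, Prod.exists, Prod.map_apply,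
    Prod.mk.injEq, edgePairs, Finset.union_insert, Finset.union_singleton,
    Finset.coe_insert, Finset.coe_union, Finset.coe_image, Finset.coe_range, Finset.coe_Ico,
    Set.mem_insert_iff, Set.mem_union, Set.mem_Iio, ↓existsAndEq, true_and, Set.mem_Ico]
  constructor
  · rintro ⟨a, b, ⟨hab, h⟩, rfl, rfl⟩
    unfold IsEdge at h
    rcases h with ((h | h) | h | h | h) | ((h | h) | h | h | h) <;> omega
  · intro h
    have hxy : x < y ∧ y < n := by omega
    refine ⟨⟨x, by omega⟩, ⟨y, hxy.2⟩, ⟨hxy.1, ?_⟩, rfl, rfl⟩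
    show IsEdge n x y ∨ IsEdge n y x
    unfold IsEdge
    rcases h with h | h | h | h | h
    · exact Or.inr (Or.inl (Or.inr (by omega)))
    · exact Or.inl (Or.inr (Or.inl (by omega)))
    · exact Or.inl (Or.inr (Or.inr (Or.inl (by omega))))
    · exact Or.inl (Or.inl (Or.inl (by omega)))
    · exact Or.inl (Or.inr (Or.inr (Or.inr (by omega))))

lemma card_edgePairs (h8 : 8 ≤ n) : (edgePairs n).card = 3 * n / 2 + 1 := by
  have hpath : ((Finset.range (n - 1)).image (fun i => (i, i + 1))).card = n - 1 := by
    rw [Finset.card_image_of_injective _ (fun i j h => congrArg Prod.fst h), Finset.card_range]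
  have hrung : ((Finset.Ico 1 (n / 2)).image (fun i => (i, n - i))).card = n / 2 - 1 := by
    rw [Finset.card_image_of_injective _ (fun i j h => congrArg Prod.fst h), Nat.card_Ico]
  have hextra :
      ({(0, n - 1), (1, n / 2 - 1), (n / 2 + 1, n - 1)} : Finset (ℕ × ℕ)).card = 3 := by
    have h₁ : (0, n - 1) ∉ ({(1, n / 2 - 1), (n / 2 + 1, n - 1)} : Finset (ℕ × ℕ)) := by
      simp only [Finset.mem_insert, Finset.mem_singleton, Prod.mk.injEq]; omega
    have h₂ : (1, n / 2 - 1) ≠ (n / 2 + 1, n - 1) := by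
      simp only [ne_eq, Prod.mk.injEq]; omega
    rw [Finset.card_insert_of_notMem h₁, Finset.card_pair h₂]
  rw [edgePairs, Finset.card_union_of_disjoint, Finset.card_union_of_disjoint, hpath, hrung,
    hextra]
  · omega
  · rw [Finset.disjoint_left]
    simp only [Finset.mem_image, Finset.mem_range, Finset.mem_Ico, not_exists, not_and, and_imp,
      forall_exists_index, forall_apply_eq_imp_iff₂, Prod.mk.injEq]
    omega
  · rw [Finset.disjoint_left]
    simp only [Finset.mem_union, Finset.mem_image, Finset.mem_range, Finset.mem_Ico,
      Finset.mem_insert, Finset.mem_singleton, not_or, Prod.forall, Prod.mk.injEq, ↓existsAndEq,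
      true_and, not_and]
    omega

lemma ncard_edgeSet (h8 : 8 ≤ n) : (graph n).edgeSet.ncard = 3 * n / 2 + 1 := by
  rw [ncard_edgeSet_eq_ncard_lt_adj, ← Set.ncard_image_of_injective _
    (Fin.val_injective.prodMap Fin.val_injective), image_val_lt_adj h8, Set.ncard_coe_finset,
    card_edgePairs h8]

/-- The rung at `x + 1` or at `y - 1` leaves the arc `(x, y)` unless `x`, `y` straddle the middle
of the cycle; then one of the two extra edges does, unless `{x, y}` is one of the two cuts. -/
lemma exists_adj_across (h8 : 8 ≤ n) {x y : Fin n} (hinner : x.1 + 1 < y.1)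
    (houter : 0 < x.1 ∨ y.1 + 1 < n) (h1 : ¬(x.1 = 1 ∧ y.1 = n - 1))
    (h2 : ¬(x.1 = n / 2 - 1 ∧ y.1 = n / 2 + 1)) :
    ∃ u w : Fin n, (x < u ∧ u < y) ∧ (w < x ∨ y < w) ∧ (graph n).Adj u w := by
  suffices ∃ u w : ℕ, (x.1 < u ∧ u < y.1) ∧ (w < x.1 ∨ y.1 < w) ∧ w < n ∧
      (IsEdge n u w ∨ IsEdge n w u) by
    obtain ⟨u, w, hu, hw, hwn, huw⟩ := this
    exact ⟨⟨u, by omega⟩, ⟨w, hwn⟩, hu, hw, (adj_iff h8).mpr huw⟩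
  unfold IsEdge
  by_cases hlow : x.1 + 1 ≤ n / 2 - 1 ∧ x.1 + y.1 ≤ n - 2
  · exact ⟨x.1 + 1, n - x.1 - 1, by omega, by omega, by omega, by omega⟩
  by_cases hhigh : n / 2 + 2 ≤ y.1 ∧ n + 2 ≤ x.1 + y.1
  · exact ⟨y.1 - 1, n - y.1 + 1, by omega, by omega, by omega, by omega⟩
  by_cases hleft : 1 < x.1 ∧ x.1 < n / 2 - 1 ∧ n / 2 - 1 < y.1
  · exact ⟨n / 2 - 1, 1, by omega, by omega, by omega, by omega⟩
  · exact ⟨n / 2 + 1, n - 1, by omega, by omega, by omega, by omega⟩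

lemma isVertexCut_pair_one_last (h8 : 8 ≤ n) {a b : Fin n} (ha : a.1 = 1) (hb : b.1 = n - 1) :
    IsVertexCut (graph n) {a, b} := by
  refine isVertexCut_of_neighborSet_subset (v := ⟨0, by omega⟩) (w := ⟨2, by omega⟩)
    ?_ ?_ (by simp) fun z hz => ?_
  · simp only [Finset.mem_insert, Finset.mem_singleton, Fin.ext_iff]; omega
  · simp only [Finset.mem_insert, Finset.mem_singleton, Fin.ext_iff]; omega
  rw [mem_neighborSet, adj_iff h8] at hz
  simp only [IsEdge] at hz
  simp only [Finset.coe_pair, Set.mem_insert_iff, Set.mem_singleton_iff, Fin.ext_iff]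
  omega

lemma isVertexCut_pair_halfPred_halfSucc (h8 : 8 ≤ n) {a b : Fin n} (ha : a.1 = n / 2 - 1)
    (hb : b.1 = n / 2 + 1) : IsVertexCut (graph n) {a, b} := by
  refine isVertexCut_of_neighborSet_subset (v := ⟨n / 2, by omega⟩) (w := ⟨0, by omega⟩)
    ?_ ?_ (by simp only [ne_eq, Fin.mk.injEq]; omega) fun z hz => ?_
  · simp only [Finset.mem_insert, Finset.mem_singleton, Fin.ext_iff]; omega
  · simp only [Finset.mem_insert, Finset.mem_singleton, Fin.ext_iff]; omega
  rw [mem_neighborSet, adj_iff h8] at hz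
  simp only [IsEdge] at hz
  simp only [Finset.coe_pair, Set.mem_insert_iff, Set.mem_singleton_iff, Fin.ext_iff]
  omega

lemma two_le_card_of_isVertexCut (h8 : 8 ≤ n) {S : Finset (Fin n)}
    (hS : IsVertexCut (graph n) S) : 2 ≤ S.card := by
  by_contra! hS2
  obtain h0 | h1 : S.card = 0 ∨ S.card = 1 := by omega
  · exact not_isVertexCut_empty (connected h8) (Finset.card_eq_zero.mp h0 ▸ hS)
  · obtain ⟨x, rfl⟩ := Finset.card_eq_one.mp h1
    refine hS.2 ?_
    rw [Finset.coe_singleton]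
    exact connected_induce_compl_singleton (cycleGraph_le h8) (by omega) x

lemma graphConnectivity_eq_two (h8 : 8 ≤ n) : graphConnectivity (graph n) = 2 := by
  obtain ⟨a, ha⟩ : ∃ a : Fin n, a.1 = 1 := ⟨⟨1, by omega⟩, rfl⟩
  obtain ⟨b, hb⟩ : ∃ b : Fin n, b.1 = n - 1 := ⟨⟨n - 1, by omega⟩, rfl⟩
  have hcard : ({a, b} : Finset (Fin n)).card = 2 :=
    Finset.card_pair (by rw [Ne, Fin.ext_iff]; omega)
  rw [← hcard]
  exact graphConnectivity_eq_of_isVertexCut (isVertexCut_pair_one_last h8 ha hb) fun T hT =>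
    hcard ▸ two_le_card_of_isVertexCut h8 hT

lemma isVertexCut_and_card_eq_two_iff (h8 : 8 ≤ n) {a b c d : Fin n} (ha : a.1 = 1)
    (hb : b.1 = n - 1) (hc : c.1 = n / 2 - 1) (hd : d.1 = n / 2 + 1) (S : Finset (Fin n)) :
    IsVertexCut (graph n) S ∧ S.card = 2 ↔ S = {a, b} ∨ S = {c, d} := by
  constructor
  · rintro ⟨hS, hcard⟩
    obtain ⟨x, y, hne, rfl⟩ := Finset.card_eq_two.mp hcard
    wlog hxy : x < y generalizing x y
    · rw [Finset.pair_comm] at hS ⊢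
      exact this y x hne.symm hS (Finset.card_pair hne.symm)
        (lt_of_le_of_ne (not_lt.mp hxy) hne.symm)
    by_contra hother
    refine hS.2 ?_
    rw [Finset.coe_pair]
    refine connected_induce_compl_pair (cycleGraph_le h8) (by omega) hxy fun hin hout =>
      exists_adj_across h8 hin hout ?_ ?_
    · rintro ⟨hx, hy⟩
      exact hother (Or.inl (by rw [Fin.ext (hx.trans ha.symm), Fin.ext (hy.trans hb.symm)]))
    · rintro ⟨hx, hy⟩
      exact hother (Or.inr (by rw [Fin.ext (hx.trans hc.symm), Fin.ext (hy.trans hd.symm)]))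
  · rintro (rfl | rfl)
    · exact ⟨isVertexCut_pair_one_last h8 ha hb,
        Finset.card_pair (by rw [Ne, Fin.ext_iff]; omega)⟩
    · exact ⟨isVertexCut_pair_halfPred_halfSucc h8 hc hd,
        Finset.card_pair (by rw [Ne, Fin.ext_iff]; omega)⟩

lemma adj_one_last (h8 : 8 ≤ n) {a b : Fin n} (ha : a.1 = 1) (hb : b.1 = n - 1) :
    (graph n).Adj a b :=
  (adj_iff h8).mpr (Or.inl (by unfold IsEdge; omega))

lemma adj_halfPred_halfSucc (h8 : 8 ≤ n) (heven : Even n) {a b : Fin n}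
    (ha : a.1 = n / 2 - 1) (hb : b.1 = n / 2 + 1) : (graph n).Adj a b := by
  refine (adj_iff h8).mpr (Or.inl ?_)
  obtain ⟨k, rfl⟩ := heven
  unfold IsEdge
  omega

end Gn

/-- For even `n ≥ 8`, the graph `G_n` (a cycle `v_1 ⋯ v_n v_1` together with
the edges `v_2 v_{n/2}`, `v_{(n+4)/2} v_n` and `v_i v_{n+2-i}` for
`2 ≤ i ≤ n/2`; here `v_i` is the vertex `i - 1 : Fin n`) is connected, has
order `n` and size `3n/2 + 1`, its minimum vertex cuts are exactly
`{v_2, v_n}` and `{v_{n/2}, v_{(n+4)/2}}`, each of which induces an edge, and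
hence it has no independent minimum vertex cut. -/
theorem G_n_even_no_independent_minimum_vertex_cut
    (n : ℕ) (h8 : 8 ≤ n) (heven : Even n) (G : SimpleGraph (Fin n))
    (hG : G = SimpleGraph.fromRel (fun a b =>
        (b.val = (a.val + 1) % n) ∨
        (a.val = 1 ∧ b.val = n / 2 - 1) ∨
        (a.val = n / 2 + 1 ∧ b.val = n - 1) ∨
        (1 ≤ a.val ∧ a.val ≤ n / 2 - 1 ∧ b.val = n - a.val))) :
    G.Connected ∧ Fintype.card (Fin n) = n ∧ G.edgeSet.ncard = 3 * n / 2 + 1 ∧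
    (∀ S : Finset (Fin n), (IsVertexCut G S ∧ S.card = graphConnectivity G) ↔
      (S = {⟨1, by omega⟩, ⟨n - 1, by omega⟩} ∨
       S = {⟨n / 2 - 1, by omega⟩, ⟨n / 2 + 1, by omega⟩})) ∧
    G.Adj ⟨1, by omega⟩ ⟨n - 1, by omega⟩ ∧
    G.Adj ⟨n / 2 - 1, by omega⟩ ⟨n / 2 + 1, by omega⟩ ∧
    ¬ ∃ S : Finset (Fin n), IsVertexCut G S ∧ S.card = graphConnectivity G ∧
      ∀ a ∈ S, ∀ b ∈ S, ¬ G.Adj a b := by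
  obtain rfl : G = Gn.graph n := hG
  have hmin : ∀ S : Finset (Fin n), IsVertexCut (Gn.graph n) S ∧
      S.card = graphConnectivity (Gn.graph n) ↔
        S = {⟨1, by omega⟩, ⟨n - 1, by omega⟩} ∨
          S = {⟨n / 2 - 1, by omega⟩, ⟨n / 2 + 1, by omega⟩} := by
    rw [Gn.graphConnectivity_eq_two h8]
    exact Gn.isVertexCut_and_card_eq_two_iff h8 rfl rfl rfl rfl
  refine ⟨Gn.connected h8, Fintype.card_fin n, Gn.ncard_edgeSet h8, hmin,
    Gn.adj_one_last h8 rfl rfl, Gn.adj_halfPred_halfSucc h8 heven rfl rfl, ?_⟩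
  rintro ⟨S, hS, hcard, hind⟩
  have hnot_pair : ∀ a b : Fin n, (Gn.graph n).Adj a b → S ≠ {a, b} := fun a b hadj hS =>
    hind a (by simp [hS]) b (by simp [hS]) hadj
  rcases (hmin S).mp ⟨hS, hcard⟩ with hS | hS
  · exact hnot_pair _ _ (Gn.adj_one_last h8 rfl rfl) hS
  · exact hnot_pair _ _ (Gn.adj_halfPred_halfSucc h8 heven rfl rfl) hS
end
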